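/- arXiv:1504.06305 — 3 statements merged into one kernel-verified Lean document; each statement's English description precedes it below -/
import Mathlib

section
/- Suppose there exist a ∈ ℝⁿ with ‖a‖₂ ≤ 1 and constants 0 < φ_min ≤ φ_max such that λ_min(n^{-1/2}𝒳*(a)) ≥ φ_min and λ_max(n^{-1/2}𝒳*(a)) ≤ φ_max, where 𝒳*(a) = ∑ᵢ aᵢXᵢ. Then for any ζ > 1 and R = ζ φ_max/φ_min, for all A ⪰ 0 with tr(A) = R and B ⪰ 0 with tr(B) = 1, one has (1/n)‖𝒳(A) − 𝒳(B)‖₂² ≥ (ζ−1)² φ_max². -/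
/-!
Put `M = n^{-1/2} 𝒳*(a)`, so that `φmin • 1 ≤ M ≤ φmax • 1` in the Loewner order.
Pairing these bounds with `A ⪰ 0` and `B ⪰ 0` gives
`tr(M (A - B)) ≥ φmin tr A - φmax tr B = (ζ - 1) φmax ≥ 0`.
On the other hand `tr(M (A - B)) = n^{-1/2} ⟨a, 𝒳(A) - 𝒳(B)⟩`, which by Cauchy–Schwarz and
`‖a‖₂ ≤ 1` is at most `n^{-1/2} ‖𝒳(A) - 𝒳(B)‖₂`. Squaring gives the claim.
-/

open Matrix
open scoped ComplexOrder

namespace Matrix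

variable {ι : Type*} [Fintype ι]

theorem PosSemidef.trace_mul_nonneg {𝕜 : Type*} [RCLike 𝕜] {M A : Matrix ι ι 𝕜}
    (hM : M.PosSemidef) (hA : A.PosSemidef) : 0 ≤ (M * A).trace := by
  classical
  obtain ⟨B, rfl⟩ : ∃ B : Matrix ι ι 𝕜, A = Bᴴ * B := by
    open scoped MatrixOrder in exact CStarAlgebra.nonneg_iff_eq_star_mul_self.mp hA.nonneg
  rw [← mul_assoc, trace_mul_comm, ← mul_assoc]
  exact (hM.mul_mul_conjTranspose_same B).trace_nonneg

variable [DecidableEq ι] {M A : Matrix ι ι ℝ} {c : ℝ}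

theorem PosSemidef.mul_trace_le_trace_mul (hM : (M - c • 1).PosSemidef) (hA : A.PosSemidef) :
    c * A.trace ≤ (M * A).trace := by
  have h := hM.trace_mul_nonneg hA
  rw [sub_mul, trace_sub, smul_mul_assoc, one_mul, trace_smul, smul_eq_mul] at h
  linarith

theorem PosSemidef.trace_mul_le_mul_trace (hM : (c • 1 - M).PosSemidef) (hA : A.PosSemidef) :
    (M * A).trace ≤ c * A.trace := by
  have h := hM.trace_mul_nonneg hA
  rw [sub_mul, trace_sub, smul_mul_assoc, one_mul, trace_smul, smul_eq_mul] at h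
  linarith

end Matrix

theorem Matrix.trace_sum_smul_mul {ι κ R : Type*} [Fintype ι] [Fintype κ] [CommRing R]
    (a : κ → R) (X : κ → Matrix ι ι R) (C : Matrix ι ι R) :
    ((∑ k, a k • X k) * C).trace = ∑ k, a k * (X k * C).trace := by
  simp only [Finset.sum_mul, trace_sum, smul_mul_assoc, trace_smul, smul_eq_mul]

theorem sq_sum_mul_le_sum_sq_of_sum_sq_le_one {ι : Type*} [Fintype ι] {a : ι → ℝ}
    (ha : ∑ i, a i ^ 2 ≤ 1) (v : ι → ℝ) : (∑ i, a i * v i) ^ 2 ≤ ∑ i, v i ^ 2 :=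
  calc (∑ i, a i * v i) ^ 2 ≤ (∑ i, a i ^ 2) * ∑ i, v i ^ 2 :=
        Finset.sum_mul_sq_le_sq_mul_sq _ _ _
    _ ≤ ∑ i, v i ^ 2 :=
        mul_le_of_le_one_left (Finset.sum_nonneg fun i _ => sq_nonneg (v i)) ha

theorem slow_rate_condition_of_posdef_in_range_general {m n : ℕ}
    (X : Fin n → Matrix (Fin m) (Fin m) ℝ)
    (a : Fin n → ℝ) (ha : ∑ i, a i ^ 2 ≤ 1)
    (φmin φmax ζ : ℝ) (hφmin : 0 < φmin) (hφ : φmin ≤ φmax) (hζ : 1 < ζ)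
    (hlow : ((Real.sqrt n)⁻¹ • (∑ i, a i • X i) -
        φmin • (1 : Matrix (Fin m) (Fin m) ℝ)).PosSemidef)
    (hhigh : (φmax • (1 : Matrix (Fin m) (Fin m) ℝ) -
        (Real.sqrt n)⁻¹ • (∑ i, a i • X i)).PosSemidef)
    (A B : Matrix (Fin m) (Fin m) ℝ)
    (hA : A.PosSemidef) (hAtr : A.trace = ζ * φmax / φmin)
    (hB : B.PosSemidef) (hBtr : B.trace = 1) :
    (ζ - 1) ^ 2 * φmax ^ 2 ≤
      (1 / (n : ℝ)) * ∑ i, ((X i * A).trace - (X i * B).trace) ^ 2 := by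
  set M := (Real.sqrt n)⁻¹ • ∑ i, a i • X i
  set v : Fin n → ℝ := fun i => (X i * A).trace - (X i * B).trace
  have hgap : (ζ - 1) * φmax ≤ (M * A).trace - (M * B).trace := by
    have hMA := hlow.mul_trace_le_trace_mul hA
    have hMB := hhigh.trace_mul_le_mul_trace hB
    rw [hAtr, mul_div_cancel₀ _ hφmin.ne'] at hMA
    rw [hBtr] at hMB
    linarith
  have hpairing : (M * A).trace - (M * B).trace = (Real.sqrt n)⁻¹ * ∑ i, a i * v i := by
    simp only [M, v, smul_mul_assoc, trace_smul, smul_eq_mul, trace_sum_smul_mul, mul_sub,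
      Finset.sum_sub_distrib]
  have hgap_nonneg : 0 ≤ (ζ - 1) * φmax :=
    mul_nonneg (sub_nonneg.mpr hζ.le) (hφmin.le.trans hφ)
  calc (ζ - 1) ^ 2 * φmax ^ 2 = ((ζ - 1) * φmax) ^ 2 := (mul_pow _ _ _).symm
    _ ≤ ((Real.sqrt n)⁻¹ * ∑ i, a i * v i) ^ 2 := by
        rw [← hpairing]; exact pow_le_pow_left₀ hgap_nonneg hgap 2
    _ = (1 / (n : ℝ)) * (∑ i, a i * v i) ^ 2 := by
        rw [mul_pow, inv_pow, Real.sq_sqrt n.cast_nonneg, one_div]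
    _ ≤ (1 / (n : ℝ)) * ∑ i, v i ^ 2 :=
        mul_le_mul_of_nonneg_left (sq_sum_mul_le_sum_sq_of_sum_sq_le_one ha v) (by positivity)

/-- Suppose there are `a ∈ ℝⁿ` with `‖a‖₂ ≤ 1` and constants
`0 < φmin ≤ φmax` such that `φmin ≤ λ_min(n^{-1/2} 𝒳*(a))` and
`λ_max(n^{-1/2} 𝒳*(a)) ≤ φmax` (phrased via the Loewner order). Then for any `ζ > 1`
and `R = ζ φmax / φmin`, every `A ⪰ 0` with `tr A = R` and `B ⪰ 0` with `tr B = 1`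
satisfy `(1/n) ‖𝒳(A) - 𝒳(B)‖₂² ≥ (ζ - 1)² φmax²`. -/
theorem slow_rate_condition_of_posdef_in_range {m n : ℕ}
    (X : Fin n → Matrix (Fin m) (Fin m) ℝ) (hXs : ∀ i, (X i).IsSymm)
    (a : Fin n → ℝ) (ha : ∑ i, a i ^ 2 ≤ 1)
    (φmin φmax ζ : ℝ) (hφmin : 0 < φmin) (hφ : φmin ≤ φmax) (hζ : 1 < ζ)
    (hlow : ((Real.sqrt n)⁻¹ • (∑ i, a i • X i) -
        φmin • (1 : Matrix (Fin m) (Fin m) ℝ)).PosSemidef)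
    (hhigh : (φmax • (1 : Matrix (Fin m) (Fin m) ℝ) -
        (Real.sqrt n)⁻¹ • (∑ i, a i • X i)).PosSemidef)
    (A B : Matrix (Fin m) (Fin m) ℝ)
    (hA : A.PosSemidef) (hAtr : A.trace = ζ * φmax / φmin)
    (hB : B.PosSemidef) (hBtr : B.trace = 1) :
    (ζ - 1) ^ 2 * φmax ^ 2 ≤
      (1 / (n : ℝ)) * ∑ i, ((X i * A).trace - (X i * B).trace) ^ 2 :=
  slow_rate_condition_of_posdef_in_range_general X a ha φmin φmax ζ hφmin hφ hζ hlow hhigh A B hA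
    hAtr hB hBtr
end

section
/- Conversely to the previous statement: if τ²(𝕋) = 0, then there exist Θ ∈ 𝕋 and Λ ∈ 𝕋^⊥ ∩ S₊^m with tr(Λ) = 1 such that 𝒳(Θ + Λ) = 0; hence for any Σ* ∈ 𝕋 ∩ S₊^m with Σ* + Θ ⪰ 0, the matrix Σ̂ = Σ* + Θ + Λ is positive semidefinite, satisfies 𝒳(Σ̂) = 𝒳(Σ*), and Σ̂ ≠ Σ*. -/
open Matrix

/-- The orthogonal complement of a subspace `T` of matrices within the symmetric
matrices, with respect to the trace inner product `⟨A, B⟩ = tr (Aᵀ B)`. -/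
def perpSym {m : ℕ} (T : Submodule ℝ (Matrix (Fin m) (Fin m) ℝ)) :
    Set (Matrix (Fin m) (Fin m) ℝ) :=
  {M | M.IsSymm ∧ ∀ N ∈ T, (Mᵀ * N).trace = 0}

/-- If `τ²(𝕋) = 0` and the minimum is attained (i.e. there are `Θ₀ ∈ 𝕋`
and `Λ₀ ∈ 𝕋^⊥ ∩ S₊` with `tr Λ₀ = 1` and `𝒳(Θ₀) - 𝒳(Λ₀) = 0`), then there exist
`Θ ∈ 𝕋` and `Λ ∈ 𝕋^⊥ ∩ S₊` with `tr Λ = 1` and `𝒳(Θ + Λ) = 0` such that for every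
`Σ* ∈ 𝕋 ∩ S₊` with `Σ* + Θ ⪰ 0`, the matrix `Σ̂ = Σ* + Θ + Λ` is positive
semidefinite, satisfies `𝒳(Σ̂) = 𝒳(Σ*)`, and `Σ̂ ≠ Σ*`. -/
theorem noiseless_nonrecovery_of_tau_zero {m n : ℕ}
    (Xop : Matrix (Fin m) (Fin m) ℝ →ₗ[ℝ] EuclideanSpace ℝ (Fin n))
    (T : Submodule ℝ (Matrix (Fin m) (Fin m) ℝ))
    (hTsym : ∀ M ∈ T, M.IsSymm)
    (hattain : ∃ Θ₀ ∈ T, ∃ Λ₀ ∈ perpSym T, Λ₀.PosSemidef ∧ Λ₀.trace = 1 ∧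
      Xop Θ₀ - Xop Λ₀ = 0) :
    ∃ Θ ∈ T, ∃ Λ ∈ perpSym T, Λ.PosSemidef ∧ Λ.trace = 1 ∧
      Xop (Θ + Λ) = 0 ∧
      ∀ Sstar ∈ T, Sstar.PosSemidef → (Sstar + Θ).PosSemidef →
        (Sstar + Θ + Λ).PosSemidef ∧
        Xop (Sstar + Θ + Λ) = Xop Sstar ∧
        Sstar + Θ + Λ ≠ Sstar := by
  obtain ⟨Θ₀, hΘ₀, Λ₀, hΛ₀perp, hΛ₀psd, hΛ₀tr, hX⟩ := hattain
  refine ⟨-Θ₀, neg_mem hΘ₀, Λ₀, hΛ₀perp, hΛ₀psd, hΛ₀tr, ?_, ?_⟩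
  · simp only [map_add, map_neg]
    rw [sub_eq_zero] at hX
    simp [hX]
  · intro Sstar hS hSpsd hSΘpsd
    refine ⟨hSΘpsd.add hΛ₀psd, ?_, ?_⟩
    · have : Xop (Sstar + -Θ₀ + Λ₀) = Xop Sstar + (Xop Λ₀ - Xop Θ₀) := by
        simp [map_add, map_neg]; abel
      rw [this, sub_eq_zero] at *
      simp [hX]
    · intro h
      have h2 : -Θ₀ + Λ₀ = 0 := by
        have := congrArg (· - Sstar) h
        simpa [add_assoc, add_sub_cancel_left] using this
      have hΛeq : Θ₀ = Λ₀ := neg_add_eq_zero.mp h2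
      have htr0 : (Λ₀ᵀ * Λ₀).trace = 0 := by
        have := hΛ₀perp.2 Θ₀ hΘ₀
        rwa [hΛeq] at this
      have hzero : Λ₀ = 0 := by
        have hsum : ∑ i, ∑ j, (Λ₀ j i) * (Λ₀ j i) = 0 := by
          have := htr0
          simpa [Matrix.trace, Matrix.diag, Matrix.mul_apply, Matrix.transpose_apply] using this
        ext i j
        have hnn : ∀ p ∈ (Finset.univ : Finset (Fin m)), (0:ℝ) ≤ ∑ q, (Λ₀ q p) * (Λ₀ q p) :=
          fun p _ => Finset.sum_nonneg (fun q _ => mul_self_nonneg _)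
        have h1 := (Finset.sum_eq_zero_iff_of_nonneg hnn).mp hsum
        have h2 : ∀ q ∈ (Finset.univ : Finset (Fin m)), (Λ₀ q j) * (Λ₀ q j) = 0 :=
          (Finset.sum_eq_zero_iff_of_nonneg (fun q _ => mul_self_nonneg _)).mp (h1 j (Finset.mem_univ j))
        have := h2 i (Finset.mem_univ i)
        simpa [mul_self_eq_zero] using this
      rw [hzero] at hΛ₀tr
      simp at hΛ₀tr
end

section
/- Estimation error bound in the 'easy' case: with Δ̂ = Δ̂_𝕋 + Δ̂_{𝕋⊥} (orthogonal decomposition with Δ̂_{𝕋⊥} ⪰ 0), suppose (1/n)‖𝒳(Δ̂)‖₂² ≤ 2λ₀(‖Δ̂_𝕋‖₁ + ‖Δ̂_{𝕋⊥}‖₁), ‖Δ̂_𝕋‖₁ ≤ ‖Δ̂_{𝕋⊥}‖₁, and the separability bound (1/n)‖𝒳(Δ̂)‖₂² ≥ τ²(𝕋)‖Δ̂_{𝕋⊥}‖₁². Then ‖Δ̂‖₁ ≤ 8λ₀/τ²(𝕋). -/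
open Matrix

/-- Nuclear norm of a real symmetric (Hermitian) matrix: the sum of the absolute values
of its eigenvalues. (Junk value `0` for non-Hermitian matrices.) -/
noncomputable def nucNorm {m : ℕ} (M : Matrix (Fin m) (Fin m) ℝ) : ℝ :=
  if h : M.IsHermitian then ∑ i, |h.eigenvalues i| else 0

/-- Estimation error bound in the 'easy' case. With
`Δ̂ = Δ̂_𝕋 + Δ̂_{𝕋⊥}`, suppose the basic inequality
`(1/n)‖𝒳(Δ̂)‖₂² ≤ 2λ₀(‖Δ̂_𝕋‖₁ + ‖Δ̂_{𝕋⊥}‖₁)` holds, `‖Δ̂_𝕋‖₁ ≤ ‖Δ̂_{𝕋⊥}‖₁`,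
and the separability bound `(1/n)‖𝒳(Δ̂)‖₂² ≥ τ²(𝕋)‖Δ̂_{𝕋⊥}‖₁²` holds with
`τ²(𝕋) > 0` and `λ₀ ≥ 0`. Then `‖Δ̂‖₁ ≤ 8λ₀/τ²(𝕋)` (using
`‖Δ̂‖₁ ≤ ‖Δ̂_𝕋‖₁ + ‖Δ̂_{𝕋⊥}‖₁`). -/
theorem estimation_error_easy_case {m n : ℕ}
    (Xop : Matrix (Fin m) (Fin m) ℝ →ₗ[ℝ] EuclideanSpace ℝ (Fin n))
    (ΔT ΔP : Matrix (Fin m) (Fin m) ℝ)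
    (hΔPpsd : ΔP.PosSemidef)
    (lam0 tauT : ℝ) (hlam0 : 0 ≤ lam0) (htauT : 0 < tauT)
    (hbasic : (1 / (n : ℝ)) * ‖Xop (ΔT + ΔP)‖ ^ 2 ≤
      2 * lam0 * (nucNorm ΔT + nucNorm ΔP))
    (hTle : nucNorm ΔT ≤ nucNorm ΔP)
    (hsep : tauT * nucNorm ΔP ^ 2 ≤ (1 / (n : ℝ)) * ‖Xop (ΔT + ΔP)‖ ^ 2)
    (htri : nucNorm (ΔT + ΔP) ≤ nucNorm ΔT + nucNorm ΔP) :
    nucNorm (ΔT + ΔP) ≤ 8 * lam0 / tauT := by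
  have hp : 0 ≤ nucNorm ΔP := by
    unfold nucNorm; split
    · exact Finset.sum_nonneg fun i _ => abs_nonneg _
    · exact le_refl 0
  set p := nucNorm ΔP
  have h1 : tauT * p ^ 2 ≤ 4 * lam0 * p := by nlinarith
  have h2 : nucNorm (ΔT + ΔP) ≤ 2 * p := by linarith
  rcases eq_or_lt_of_le hp with h | h
  · rw [le_div_iff₀ htauT]; nlinarith
  · have : tauT * p ≤ 4 * lam0 := by
      have := mul_le_mul_of_nonneg_right h1 (le_of_lt (inv_pos.mpr h))
      field_simp at this ⊢
      nlinarith
    rw [le_div_iff₀ htauT]; nlinarith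
end
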